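/- Let f be a nonconstant entire function with M(1,f) ≥ 1, let n ≥ 1 be an integer, let R > 1, and set S = R^{2+2/(2n+1)}. Suppose t ≥ S satisfies log m(t,f) > (1 − 2/(2n+1)³) log M(S,f), and suppose furthermore that [(1 − 2/(2n+1)³)(2 + 2/(2n+1)) − (2 + 1/(n+1))] · log M(R,f) > (1 − 2/(2n+1)³)(2 + 2/(2n+1)) · log M(1,f). Then m(t,f) > M(R,f)^{2+1/(n+1)}. -/

import Mathlib

open Filter MeasureTheory

/-- The maximum modulus `M(r,f) = max_{|z|=r} |f z|`. -/
noncomputable def maxMod (f : ℂ → ℂ) (r : ℝ) : ℝ :=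
  sSup ((fun z => ‖f z‖) '' Metric.sphere (0 : ℂ) r)

/-- The minimum modulus `m(r,f) = min_{|z|=r} |f z|`. -/
noncomputable def minMod (f : ℂ → ℂ) (r : ℝ) : ℝ :=
  sInf ((fun z => ‖f z‖) '' Metric.sphere (0 : ℂ) r)

/-- The upper logarithmic density of a set `E ⊆ (1,∞)`:
`limsup_{R→∞} (1/log R) ∫_{E∩(1,R)} dt/t`. -/
noncomputable def upperLogDens (E : Set ℝ) : ℝ :=
  Filter.limsup (fun R : ℝ => (Real.log R)⁻¹ * ∫ t in E ∩ Set.Ioo 1 R, t⁻¹) Filter.atTop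

/-- `f` is a transcendental entire function: entire and not a polynomial. -/
def TranscendentalEntire (f : ℂ → ℂ) : Prop :=
  Differentiable ℂ f ∧ ¬ ∃ p : Polynomial ℂ, ∀ z, f z = p.eval z

/-- The order `λ(f) = limsup_{r→∞} log log M(r,f) / log r`, as an extended real. -/
noncomputable def eOrder (f : ℂ → ℂ) : EReal :=
  Filter.limsup
    (fun r : ℝ => ((Real.log (Real.log (maxMod f r)) / Real.log r : ℝ) : EReal))
    Filter.atTop

/-- The lower order `ρ(f) = liminf_{r→∞} log log M(r,f) / log r`, as an extended real. -/
noncomputable def eLowerOrder (f : ℂ → ℂ) : EReal :=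
  Filter.liminf
    (fun r : ℝ => ((Real.log (Real.log (maxMod f r)) / Real.log r : ℝ) : EReal))
    Filter.atTop

/-!
Hadamard's three-circles theorem on the radii `1 < R < S = R ^ c`, `c = 2 + 2/(2n+1)`, gives
`c log M(R) ≤ (c - 1) log M(1) + log M(S)`. Since `α = 1 - 2/(2n+1)³ > 0`, the bound on
`log m(t)` then gives `log m(t) > α c log M(R) - α (c - 1) log M(1)`, and the hypothesis on
`log M(R)` (with `log M(1) ≥ 0`) is what makes the right side exceed `(2 + 1/(n+1)) log M(R)`.
-/

lemma norm_le_maxMod {f : ℂ → ℂ} (hf : Continuous f) {r : ℝ} {z : ℂ} (hz : ‖z‖ = r) :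
    ‖f z‖ ≤ maxMod f r :=
  le_csSup ((isCompact_sphere (0 : ℂ) r).image (continuous_norm.comp hf)).bddAbove
    ⟨z, by simpa using hz, rfl⟩

lemma maxMod_le {f : ℂ → ℂ} {r C : ℝ} (hr : 0 ≤ r) (h : ∀ z : ℂ, ‖z‖ = r → ‖f z‖ ≤ C) :
    maxMod f r ≤ C := by
  refine csSup_le ((NormedSpace.sphere_nonempty.mpr hr).image _) ?_
  rintro _ ⟨z, hz, rfl⟩
  exact h z (by simpa using hz)

lemma minMod_nonneg (f : ℂ → ℂ) (r : ℝ) : 0 ≤ minMod f r :=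
  Real.sInf_nonneg <| by
    rintro _ ⟨z, -, rfl⟩
    exact norm_nonneg _

lemma maxMod_mono {f : ℂ → ℂ} (hf : Differentiable ℂ f) {r r' : ℝ} (hr : 0 ≤ r) (hr' : 0 < r')
    (h : r ≤ r') : maxMod f r ≤ maxMod f r' := by
  refine maxMod_le hr fun z hz => ?_
  refine Complex.norm_le_of_forall_mem_frontier_norm_le (U := Metric.ball 0 r')
    Metric.isBounded_ball hf.diffContOnCl (fun w hw => ?_)
    (by rwa [closure_ball 0 hr'.ne', mem_closedBall_zero_iff, hz])
  rw [frontier_ball (0 : ℂ) hr'.ne'] at hw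
  exact norm_le_maxMod hf.continuous (by simpa using hw)

open Complex.HadamardThreeLines in
/-- **Hadamard's three-circles theorem**: the three-lines theorem for `f ∘ exp`. -/
theorem maxMod_le_rpow_mul_rpow {f : ℂ → ℂ} (hf : Differentiable ℂ f) {a b r : ℝ}
    (ha : 0 < a) (hab : a < b) (har : a ≤ r) (hrb : r ≤ b) :
    maxMod f r ≤ maxMod f a ^ (1 - (Real.log r - Real.log a) / (Real.log b - Real.log a)) *
      maxMod f b ^ ((Real.log r - Real.log a) / (Real.log b - Real.log a)) := by
  have hr : 0 < r := ha.trans_le har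
  refine maxMod_le hr.le fun z hz => ?_
  have hz0 : z ≠ 0 := by rintro rfl; simp [hr.ne] at hz
  have hre : (Complex.log z).re = Real.log r := by rw [Complex.log_re, hz]
  obtain ⟨C, hC⟩ := (isCompact_closedBall (0 : ℂ) b).exists_bound_of_continuousOn
    hf.continuous.continuousOn
  have hbound : ∀ w ∈ verticalClosedStrip (Real.log a) (Real.log b),
      ‖f (Complex.exp w)‖ ≤ C := fun w hw => hC _ <| by
    rw [Metric.mem_closedBall, dist_zero_right, Complex.norm_exp, ← Real.exp_log (ha.trans hab)]
    exact Real.exp_le_exp.mpr hw.2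
  have hedge : ∀ s > 0, ∀ w ∈ Complex.re ⁻¹' {Real.log s}, ‖f (Complex.exp w)‖ ≤ maxMod f s :=
    fun s hs w hw => norm_le_maxMod hf.continuous <| by
      rw [Complex.norm_exp, Set.mem_preimage.mp hw, Real.exp_log hs]
  have key := norm_le_interp_of_mem_verticalClosedStrip'
    (f := f ∘ Complex.exp) (z := Complex.log z) (Real.log_lt_log ha hab)
    (by simpa [verticalClosedStrip, hre] using
      ⟨Real.log_le_log ha har, Real.log_le_log hr hrb⟩)
    (hf.comp Complex.differentiable_exp).diffContOnCl
    ⟨C, by rintro _ ⟨w, hw, rfl⟩; exact hbound w hw⟩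
    (hedge a ha) (hedge b (ha.trans hab))
  simpa [Complex.exp_log hz0, hre] using key

theorem log_maxMod_le {f : ℂ → ℂ} (hf : Differentiable ℂ f) {a b r : ℝ}
    (ha : 0 < a) (hab : a < b) (har : a ≤ r) (hrb : r ≤ b) (hMa : 0 < maxMod f a) :
    Real.log (maxMod f r) ≤
      (1 - (Real.log r - Real.log a) / (Real.log b - Real.log a)) * Real.log (maxMod f a) +
        (Real.log r - Real.log a) / (Real.log b - Real.log a) * Real.log (maxMod f b) := by
  have hMb : 0 < maxMod f b := hMa.trans_le (maxMod_mono hf ha.le (ha.trans hab) hab.le)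
  have hMr : 0 < maxMod f r := hMa.trans_le (maxMod_mono hf ha.le (ha.trans_le har) har)
  calc Real.log (maxMod f r)
      ≤ Real.log (maxMod f a ^ (1 - (Real.log r - Real.log a) / (Real.log b - Real.log a)) *
          maxMod f b ^ ((Real.log r - Real.log a) / (Real.log b - Real.log a))) :=
        Real.log_le_log hMr (maxMod_le_rpow_mul_rpow hf ha hab har hrb)
    _ = _ := by
        rw [Real.log_mul (Real.rpow_pos_of_pos hMa _).ne' (Real.rpow_pos_of_pos hMb _).ne',
          Real.log_rpow hMa, Real.log_rpow hMb]

theorem mul_log_maxMod_le_log_maxMod_rpow {f : ℂ → ℂ} (hf : Differentiable ℂ f)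
    (hM1 : 0 < maxMod f 1) {R c : ℝ} (hR : 1 < R) (hc : 1 < c) :
    c * Real.log (maxMod f R) ≤ (c - 1) * Real.log (maxMod f 1) + Real.log (maxMod f (R ^ c)) := by
  have hlogR : 0 < Real.log R := Real.log_pos hR
  have hRRc : R < R ^ c := by simpa using Real.rpow_lt_rpow_of_exponent_lt hR hc
  have h := log_maxMod_le hf one_pos (hR.trans hRRc) hR.le hRRc.le hM1
  rw [Real.log_one, sub_zero, sub_zero, Real.log_rpow (one_pos.trans hR),
    div_mul_cancel_right₀ hlogR.ne'] at h
  have hc0 : 0 < c := one_pos.trans hc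
  calc c * Real.log (maxMod f R)
      ≤ c * ((1 - c⁻¹) * Real.log (maxMod f 1) + c⁻¹ * Real.log (maxMod f (R ^ c))) :=
        mul_le_mul_of_nonneg_left h hc0.le
    _ = _ := by field_simp

theorem stmt_8_general (f : ℂ → ℂ) (hf : Differentiable ℂ f)
    (hM1 : 1 ≤ maxMod f 1) (n : ℕ) (hn : 1 ≤ n) (R : ℝ) (hR : 1 < R)
    (t : ℝ)
    (hm : Real.log (minMod f t) >
      (1 - 2 / (2 * (n:ℝ) + 1) ^ 3) *
        Real.log (maxMod f (R ^ ((2:ℝ) + 2 / (2 * (n:ℝ) + 1)))))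
    (hbig : ((1 - 2 / (2 * (n:ℝ) + 1) ^ 3) * (2 + 2 / (2 * (n:ℝ) + 1))
        - (2 + 1 / ((n:ℝ) + 1))) * Real.log (maxMod f R)
      > (1 - 2 / (2 * (n:ℝ) + 1) ^ 3) * (2 + 2 / (2 * (n:ℝ) + 1)) *
          Real.log (maxMod f 1)) :
    minMod f t > maxMod f R ^ ((2:ℝ) + 1 / ((n:ℝ) + 1)) := by
  set α : ℝ := 1 - 2 / (2 * (n:ℝ) + 1) ^ 3
  set c : ℝ := 2 + 2 / (2 * (n:ℝ) + 1)
  set q : ℝ := 2 + 1 / ((n:ℝ) + 1)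
  have hα : 0 < α := by
    have h3 : (3 : ℝ) ≤ 2 * n + 1 := by norm_cast; omega
    have : 2 < (2 * (n:ℝ) + 1) ^ 3 := by linarith [pow_le_pow_left₀ (by norm_num) h3 3]
    simpa [α, sub_pos, div_lt_one (by positivity : (0:ℝ) < (2 * n + 1) ^ 3)]
  have hc : 1 < c := by linarith [show 0 < 2 / (2 * (n:ℝ) + 1) by positivity]
  have hL1 : 0 ≤ Real.log (maxMod f 1) := Real.log_nonneg hM1
  have hMR : 1 ≤ maxMod f R := hM1.trans (maxMod_mono hf zero_le_one (one_pos.trans hR) hR.le)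
  have hqLR : 0 ≤ q * Real.log (maxMod f R) := mul_nonneg (by positivity) (Real.log_nonneg hMR)
  have hcircles := mul_log_maxMod_le_log_maxMod_rpow hf (one_pos.trans_le hM1) hR hc
  have hlog : q * Real.log (maxMod f R) < Real.log (minMod f t) := by
    linarith [mul_le_mul_of_nonneg_left hcircles hα.le, mul_nonneg hα.le hL1]
  have hmt : 0 < minMod f t :=
    one_pos.trans ((Real.log_pos_iff (minMod_nonneg f t)).mp (hqLR.trans_lt hlog))
  rw [gt_iff_lt, ← Real.log_lt_log_iff (by positivity) hmt, Real.log_rpow (one_pos.trans_le hMR)]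
  exact hlog

theorem stmt_8 (f : ℂ → ℂ) (hf : Differentiable ℂ f)
    (hnc : ¬ ∃ c : ℂ, f = fun _ => c)
    (hM1 : 1 ≤ maxMod f 1) (n : ℕ) (hn : 1 ≤ n) (R : ℝ) (hR : 1 < R)
    (t : ℝ) (ht : R ^ ((2:ℝ) + 2 / (2 * (n:ℝ) + 1)) ≤ t)
    (hm : Real.log (minMod f t) >
      (1 - 2 / (2 * (n:ℝ) + 1) ^ 3) *
        Real.log (maxMod f (R ^ ((2:ℝ) + 2 / (2 * (n:ℝ) + 1)))))
    (hbig : ((1 - 2 / (2 * (n:ℝ) + 1) ^ 3) * (2 + 2 / (2 * (n:ℝ) + 1))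
        - (2 + 1 / ((n:ℝ) + 1))) * Real.log (maxMod f R)
      > (1 - 2 / (2 * (n:ℝ) + 1) ^ 3) * (2 + 2 / (2 * (n:ℝ) + 1)) *
          Real.log (maxMod f 1)) :
    minMod f t > maxMod f R ^ ((2:ℝ) + 1 / ((n:ℝ) + 1)) :=
  stmt_8_general f hf hM1 n hn R hR t hm hbig
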